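/- arXiv:0810.1697 — 3 statements merged into one kernel-verified Lean document; each statement's English description precedes it below -/
import Mathlib

section
/- With e_n defined by e_0 = 1, e_1 = z, e_{n+1} = z·e_n - e_{n-1}, for all nonnegative integers m, n one has e_m · e_n = Σ_{l} e_l, where the sum runs over all nonnegative integers l such that the triple (l, m, n) is admissible, i.e., l + m + n is even and |m - n| ≤ l ≤ m + n. -/
/-!
The recurrence gives `e (m+1) * e (n+1) = e (m+n+2) + e m * e n`, i.e. peeling one step off both
factors splits off the top term `e (m+n+2)`. On the index side, the admissible `l` for `(m+1, n+1)`
are those for `(m, n)` together with the new maximum `m+n+2`, so both sides obey the same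
recursion, and they agree when one factor is `e 0 = 1`.
-/

open Finset

abbrev admissibleIndices (m n : ℕ) : Finset ℕ :=
  (range (m + n + 1)).filter (fun l => Even (l + m + n) ∧ m ≤ n + l ∧ n ≤ m + l ∧ l ≤ m + n)

theorem admissibleIndices_zero_left (n : ℕ) : admissibleIndices 0 n = {n} := by
  ext l
  simp only [mem_filter, mem_range, mem_singleton, Nat.even_iff]
  omega

theorem admissibleIndices_zero_right (m : ℕ) : admissibleIndices m 0 = {m} := by
  ext l
  simp only [mem_filter, mem_range, mem_singleton, Nat.even_iff]
  omega

theorem admissibleIndices_succ_succ (m n : ℕ) :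
    admissibleIndices (m + 1) (n + 1) = insert (m + n + 2) (admissibleIndices m n) := by
  ext l
  simp only [mem_insert, mem_filter, mem_range, Nat.even_iff]
  omega

theorem add_add_two_notMem_admissibleIndices (m n : ℕ) : m + n + 2 ∉ admissibleIndices m n := by
  simp

section Recurrence

variable {R : Type*} [CommRing R] {x : R} {e : ℕ → R}

theorem mul_succ_succ_of_recurrence (h0 : e 0 = 1) (h1 : e 1 = x)
    (hrec : ∀ n, e (n + 2) = x * e (n + 1) - e n) (m n : ℕ) :
    e (m + 1) * e (n + 1) = e (m + n + 2) + e m * e n := by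
  induction m generalizing n with
  | zero => rw [h0, h1, zero_add, hrec]; ring
  | succ m ih =>
    have ih' := ih (n + 1)
    rw [hrec n, show m + (n + 1) + 2 = m + 1 + n + 2 by ring] at ih'
    rw [hrec m]
    linear_combination ih'

theorem mul_eq_sum_admissibleIndices_of_recurrence (h0 : e 0 = 1) (h1 : e 1 = x)
    (hrec : ∀ n, e (n + 2) = x * e (n + 1) - e n) (m n : ℕ) :
    e m * e n = ∑ l ∈ admissibleIndices m n, e l := by
  induction m generalizing n with
  | zero => simp [h0, admissibleIndices_zero_left]
  | succ m ih =>
    cases n with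
    | zero => simp [h0, admissibleIndices_zero_right]
    | succ n =>
      rw [mul_succ_succ_of_recurrence h0 h1 hrec, admissibleIndices_succ_succ,
        sum_insert (add_add_two_notMem_admissibleIndices m n), ih]

end Recurrence

theorem cable_e_product (e : ℕ → Polynomial ℤ)
    (h0 : e 0 = 1) (h1 : e 1 = Polynomial.X)
    (hrec : ∀ n : ℕ, 1 ≤ n → e (n + 1) = Polynomial.X * e n - e (n - 1)) :
    ∀ m n : ℕ, e m * e n =
      ∑ l ∈ (Finset.range (m + n + 1)).filter
        (fun l => Even (l + m + n) ∧ m ≤ n + l ∧ n ≤ m + l ∧ l ≤ m + n), e l :=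
  mul_eq_sum_admissibleIndices_of_recurrence h0 h1 fun n => hrec (n + 1) n.succ_pos
end

section
/- Let N be a nonnegative integer and α₁, α₂, α₃, ζ ∈ ℂ. Then Σ_{k=-N, k ≡ N (mod 2)}^{N} exp(α₁k² + α₂k)·sinh(α₃k + ζ) = Σ_{k=-N, k ≡ N (mod 2)}^{N} exp(α₁k² + α₃k)·sinh(α₂k + ζ). In other words, the roles of α₂ and α₃ may be exchanged. -/
open Complex

theorem Finset.map_neg_filter_Icc_even_add (n : ℤ) :
    ((Finset.Icc (-n) n).filter (fun k => Even (k + n))).map (Equiv.neg ℤ).toEmbedding =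
      (Finset.Icc (-n) n).filter (fun k => Even (k + n)) := by
  refine Finset.map_eq_of_subset fun k hk => ?_
  simp only [Finset.mem_map_equiv, Equiv.neg_symm, Equiv.neg_apply, Finset.mem_filter,
    Finset.mem_Icc] at hk ⊢
  obtain ⟨⟨hlo, hhi⟩, m, hm⟩ := hk
  exact ⟨⟨by omega, by omega⟩, n - m, by omega⟩

-- Expanding `sinh`, the two products share the term `exp (a x² + (b + c) x + ζ)`; what remains
-- is `exp (a x² - ζ) (exp ((c - b) x) - exp ((b - c) x)) / 2`, which is odd in `x`.
theorem Complex.odd_exp_mul_sinh_sub_exp_mul_sinh (a b c ζ : ℂ) :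
    Function.Odd fun x : ℂ =>
      exp (a * x ^ 2 + b * x) * sinh (c * x + ζ) - exp (a * x ^ 2 + c * x) * sinh (b * x + ζ) := by
  intro x
  simp only [Complex.sinh, mul_div_assoc', mul_sub, ← Complex.exp_add]
  ring_nf

theorem exchange_sinh (N : ℕ) (α₁ α₂ α₃ ζ : ℂ) :
    ∑ k ∈ (Finset.Icc (-(N : ℤ)) N).filter (fun k => Even (k + (N : ℤ))),
        Complex.exp (α₁ * k ^ 2 + α₂ * k) * Complex.sinh (α₃ * k + ζ) =
      ∑ k ∈ (Finset.Icc (-(N : ℤ)) N).filter (fun k => Even (k + (N : ℤ))),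
        Complex.exp (α₁ * k ^ 2 + α₃ * k) * Complex.sinh (α₂ * k + ζ) := by
  rw [← sub_eq_zero, ← Finset.sum_sub_distrib]
  have hodd := (odd_exp_mul_sinh_sub_exp_mul_sinh α₁ α₂ α₃ ζ).comp_odd
    (g := ((↑) : ℤ → ℂ)) Int.cast_neg
  exact hodd.finsetSum_eq_zero (Finset.map_neg_filter_Icc_even_add N)
end

section
/- At A = exp(πi/(2(r+1))) with [m] = sin(mπ/(r+1))/sin(π/(r+1)): for integers m with 0 < m < r, Σ_{t=0}^{r-1} (-1)^t·[t+1]·(-1)^{m+t}·[(m+1)(t+1)] = 0, i.e. the Hopf link pairing ⟨e_m, ω_r⟩_H vanishes for 0 < m < r; and for m = 0 the sum equals Σ_{t=0}^{r-1} [t+1]². -/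
/-!
Writing `θ = π/(r+1)` and `[n] = sin(nθ)/sin θ`, the sign `(-1)^t (-1)^(m+t)` collapses to
`(-1)^m`, so for `m > 0` the pairing is `(-1)^m / sin²θ` times
`∑_{t=1}^{r} sin(tθ) sin((m+1)tθ)`, an inner product of two distinct rows of the discrete sine
transform. By product-to-sum this is `½ ∑ (cos(m tθ) - cos((m+2) tθ))`, and
`∑_{t=1}^{r} cos(k tθ) = -(1 + (-1)^k)/2` for `0 < k < 2(r+1)` depends only on the parity of `k`.
-/

open Complex Finset
open scoped Real

theorem Complex.two_mul_sin_mul_sin (x y : ℂ) :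
    2 * sin x * sin y = cos (y - x) - cos (x + y) := by
  rw [cos_sub, cos_add]
  ring

theorem Complex.two_mul_sin_mul_cos (x y : ℂ) :
    2 * sin x * cos y = sin (x - y) + sin (x + y) := by
  rw [sin_sub, sin_add]
  ring

theorem Complex.sin_nat_mul_pi_sub (x : ℂ) (n : ℕ) :
    sin (n * π - x) = -((-1) ^ n * sin x) := by
  rw [sin_sub, sin_nat_mul_pi, ← ofReal_natCast, ← ofReal_mul, ← ofReal_cos,
    Real.cos_nat_mul_pi]
  push_cast
  ring

theorem Complex.sum_range_cos_nat_mul_pi_div (r k : ℕ) (hk₀ : 0 < k) (hk : k < 2 * (r + 1)) :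
    ∑ t ∈ range r, cos (k * (t + 1) * π / (r + 1)) = -(1 + (-1) ^ k) / 2 := by
  set a : ℂ := k * π / (r + 1) with ha
  have hsin : sin (a / 2) ≠ 0 := by
    rw [sin_ne_zero_iff]
    intro n hn
    have hn' : (k : ℤ) = (r + 1) * 2 * n := by
      rw [ha] at hn
      field_simp at hn
      exact_mod_cast hn
    rcases lt_trichotomy n 0 with h | h | h <;> nlinarith
  have hclosed : 2 * (sin (a / 2) * ∑ t ∈ range r, cos (a * t + a)) =
      -(1 + (-1) ^ k) * sin (a / 2) := by
    have hend : r * a / 2 + ((r - 1) * a / 2 + a) = k * π - a / 2 := by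
      rw [ha]; field_simp; ring
    rw [sin_mul_sum_cos, ← mul_assoc, two_mul_sin_mul_cos, hend, sin_nat_mul_pi_sub,
      show r * a / 2 - ((r - 1) * a / 2 + a) = -(a / 2) by ring, sin_neg]
    ring
  have hsum : ∑ t ∈ range r, cos (k * (t + 1) * π / (r + 1)) =
      ∑ t ∈ range r, cos (a * t + a) := by
    refine sum_congr rfl fun t _ => ?_
    rw [ha]; ring_nf
  rw [hsum]
  apply mul_left_cancel₀ (mul_ne_zero two_ne_zero hsin)
  linear_combination hclosed

theorem Complex.sum_range_sin_mul_sin_nat_mul_pi_div (r j k : ℕ) (hjk : j < k) (hkr : k ≤ r) :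
    ∑ t ∈ range r, sin (j * (t + 1) * π / (r + 1)) * sin (k * (t + 1) * π / (r + 1)) = 0 := by
  have hprod (t : ℕ) : 2 * (sin (j * (t + 1) * π / (r + 1)) * sin (k * (t + 1) * π / (r + 1))) =
      cos (↑(k - j) * (t + 1) * π / (r + 1)) - cos (↑(k + j) * (t + 1) * π / (r + 1)) := by
    rw [← mul_assoc, two_mul_sin_mul_sin, Nat.cast_sub hjk.le, Nat.cast_add]
    ring_nf
  have hparity : (-1 : ℂ) ^ (k + j) = (-1) ^ (k - j) := by
    rw [show k + j = (k - j) + 2 * j by omega, pow_add, pow_mul]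
    norm_num
  apply mul_left_cancel₀ (two_ne_zero (α := ℂ))
  rw [mul_sum, mul_zero]
  simp only [hprod]
  rw [sum_sub_distrib, sum_range_cos_nat_mul_pi_div r _ (by omega) (by omega),
    sum_range_cos_nat_mul_pi_div r _ (by omega) (by omega), hparity, sub_self]

theorem hopf_pairing_omega_general (r : ℕ)
    (qi : ℤ → ℂ)
    (hqi : ∀ m : ℤ, qi m = Complex.sin (m * Real.pi / (r + 1)) /
        Complex.sin (Real.pi / (r + 1))) :
    ∀ m : ℕ,
      (0 < m → m < r →
        ∑ t ∈ Finset.range r,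
            (-1 : ℂ) ^ t * qi (t + 1) * (-1 : ℂ) ^ (m + t) *
              qi ((m + 1) * (t + 1)) = 0) ∧
      (m = 0 →
        ∑ t ∈ Finset.range r,
            (-1 : ℂ) ^ t * qi (t + 1) * (-1 : ℂ) ^ (m + t) *
              qi ((m + 1) * (t + 1)) =
          ∑ t ∈ Finset.range r, qi (t + 1) ^ 2) := by
  intro m
  have hsign (t : ℕ) : (-1 : ℂ) ^ t * (-1) ^ (m + t) = (-1) ^ m := by
    rw [pow_add, mul_left_comm, ← mul_pow]
    norm_num
  have hterm (t : ℕ) : (-1 : ℂ) ^ t * qi (t + 1) * (-1) ^ (m + t) * qi ((m + 1) * (t + 1)) =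
      (-1) ^ m * (qi (t + 1) * qi ((m + 1) * (t + 1))) := by
    linear_combination qi (t + 1) * qi ((m + 1) * (t + 1)) * hsign t
  simp_rw [hterm, ← mul_sum]
  refine ⟨fun hm hmr => ?_, fun hm => ?_⟩
  · have hrows := sum_range_sin_mul_sin_nat_mul_pi_div r 1 (m + 1) (by omega) hmr
    push_cast [one_mul] at hrows
    simp only [hqi, div_mul_div_comm, ← sum_div]
    push_cast
    rw [hrows, zero_div, mul_zero]
  · subst hm
    simp [sq]

theorem hopf_pairing_omega (r : ℕ) (hr : 1 ≤ r)
    (qi : ℤ → ℂ)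
    (hqi : ∀ m : ℤ, qi m = Complex.sin (m * Real.pi / (r + 1)) /
        Complex.sin (Real.pi / (r + 1))) :
    ∀ m : ℕ,
      (0 < m → m < r →
        ∑ t ∈ Finset.range r,
            (-1 : ℂ) ^ t * qi (t + 1) * (-1 : ℂ) ^ (m + t) *
              qi ((m + 1) * (t + 1)) = 0) ∧
      (m = 0 →
        ∑ t ∈ Finset.range r,
            (-1 : ℂ) ^ t * qi (t + 1) * (-1 : ℂ) ^ (m + t) *
              qi ((m + 1) * (t + 1)) =
          ∑ t ∈ Finset.range r, qi (t + 1) ^ 2) :=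
  hopf_pairing_omega_general r qi hqi
end
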